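/- arXiv:2112.03484 — 2 statements merged into one kernel-verified Lean document; each statement's English description precedes it below -/
import Mathlib

section
/- Let G be a follower-separated, synchronizing, deterministic presentation over a finite alphabet Σ. Then ⟨G⟩ is a shift of finite type if and only if the graph Ĝ is acyclic (has no nonempty path starting and ending at the same vertex). -/
/-- A labeled graph over vertex type `V` and alphabet `A`, given by its
labeled-edge relation: `Edge p a q` means there is an edge labeled `a`
from `p` to `q`. -/
structure LabeledGraph (V A : Type) where
  Edge : V → A → V → Prop

namespace LabeledGraph

variable {V A : Type}

/-- `G.Walk p w q` : there is a (finite) path from `p` to `q` labeled `w`. -/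
def Walk (G : LabeledGraph V A) : V → List A → V → Prop
  | p, [], q => p = q
  | p, a :: w, q => ∃ r, G.Edge p a r ∧ Walk G r w q

/-- The follower set of a vertex: labels of finite paths starting at `q`. -/
def follower (G : LabeledGraph V A) (q : V) : Set (List A) :=
  { w | ∃ q', G.Walk q w q' }

/-- The transition action on sets of vertices: `S·w`. -/
def transSet (G : LabeledGraph V A) (S : Set V) (w : List A) : Set V :=
  { q' | ∃ q ∈ S, G.Walk q w q' }

/-- `G` is deterministic (right-resolving). -/
def Deterministic (G : LabeledGraph V A) : Prop :=
  ∀ p a q q', G.Edge p a q → G.Edge p a q' → q = q'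

/-- `G` is essential: every vertex has an outgoing and an incoming edge. -/
def Essential (G : LabeledGraph V A) : Prop :=
  ∀ q, (∃ a r, G.Edge q a r) ∧ (∃ a p, G.Edge p a q)

/-- The sofic shift presented by `G`: labels of bi-infinite paths. -/
def shift (G : LabeledGraph V A) : Set (ℤ → A) :=
  { x | ∃ v : ℤ → V, ∀ j : ℤ, G.Edge (v j) (x j) (v (j + 1)) }

/-- `w` is a synchronizing word for `G`: `Q_G · w` is a singleton. -/
def SyncWord (G : LabeledGraph V A) (w : List A) : Prop :=
  ∃ r, G.transSet Set.univ w = {r}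

/-- A vertex `q` is synchronizing: some word synchronizes to `q`. -/
def SyncVertex (G : LabeledGraph V A) (q : V) : Prop :=
  ∃ w, G.transSet Set.univ w = {q}

/-- `G` is synchronizing: every vertex is synchronizing. -/
def Synchronizing (G : LabeledGraph V A) : Prop :=
  ∀ q, G.SyncVertex q

/-- `G` is follower-separated. -/
def FollowerSeparated (G : LabeledGraph V A) : Prop :=
  ∀ p q, G.follower p = G.follower q → p = q

/-- `G` is irreducible (strongly connected). -/
def StronglyConnected (G : LabeledGraph V A) : Prop :=
  ∀ p q, ∃ w, G.Walk p w q

/-- `q` is reachable from `p`. -/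
def Reachable (G : LabeledGraph V A) (p q : V) : Prop :=
  ∃ w, G.Walk p w q

/-- `C` is an irreducible component: an equivalence class of mutual reachability. -/
def IsIrredComponent (G : LabeledGraph V A) (C : Set V) : Prop :=
  ∃ p, C = { q | G.Reachable p q ∧ G.Reachable q p }

/-- `C` is terminal: everything reachable from `C` lies in `C`. -/
def TerminalSet (G : LabeledGraph V A) (C : Set V) : Prop :=
  ∀ p ∈ C, ∀ q, G.Reachable p q → q ∈ C

/-- `C` is initial: everything that reaches `C` lies in `C`. -/
def InitialSet (G : LabeledGraph V A) (C : Set V) : Prop :=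
  ∀ q ∈ C, ∀ p, G.Reachable p q → p ∈ C

/-- Subgraph induced by a set `P` of vertices. -/
def induce (G : LabeledGraph V A) (P : Set V) : LabeledGraph P A where
  Edge := fun p a q => G.Edge p.1 a q.1

/-- The graph `Ĝ`: vertices are ordered pairs of distinct vertices of `G`,
with an edge labeled `a` from `(p₁,p₂)` to `(q₁,q₂)` iff `G` has edges labeled
`a` from `p₁` to `q₁` and from `p₂` to `q₂`. -/
def pairGraph (G : LabeledGraph V A) : LabeledGraph { pq : V × V // pq.1 ≠ pq.2 } A where
  Edge := fun x a y => G.Edge x.1.1 a y.1.1 ∧ G.Edge x.1.2 a y.1.2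

end LabeledGraph

/-- The word `w` appears in the bi-infinite sequence `x`. -/
def AppearsIn {A : Type} (w : List A) (x : ℤ → A) : Prop :=
  ∃ i : ℤ, ∀ n : Fin w.length, x (i + (n : ℕ)) = w.get n

/-- The language of a subset of the full shift: all finite words appearing
in some point of `X`. -/
def lang {A : Type} (X : Set (ℤ → A)) : Set (List A) :=
  { w | ∃ x ∈ X, AppearsIn w x }

/-- `X` is a shift space. -/
def IsShiftSpace {A : Type} (X : Set (ℤ → A)) : Prop :=
  ∃ F : Set (List A), X = { x | ∀ w ∈ F, ¬ AppearsIn w x }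

/-- `X` is a shift of finite type. -/
def IsSFT {A : Type} (X : Set (ℤ → A)) : Prop :=
  ∃ F : Set (List A), F.Finite ∧ X = { x | ∀ w ∈ F, ¬ AppearsIn w x }

/-- `w` is intrinsically synchronizing for `X`. -/
def IntrinsicallySync {A : Type} (X : Set (ℤ → A)) (w : List A) : Prop :=
  w ∈ lang X ∧ ∀ u v, u ++ w ∈ lang X → w ++ v ∈ lang X → u ++ (w ++ v) ∈ lang X

/-- `X` is an irreducible shift space. -/
def IrreducibleShift {A : Type} (X : Set (ℤ → A)) : Prop :=
  ∀ u ∈ lang X, ∀ v ∈ lang X, ∃ w, u ++ (w ++ v) ∈ lang X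

/-- The follower set of a word `u` in `X`. -/
def followerX {A : Type} (X : Set (ℤ → A)) (u : List A) : Set (List A) :=
  { w | u ++ w ∈ lang X }

/-- `X` is `M`-step: every word of `B(X)` of length at least `M` is
intrinsically synchronizing for `X`. -/
def MStep {A : Type} (X : Set (ℤ → A)) (M : ℕ) : Prop :=
  ∀ w ∈ lang X, M ≤ w.length → IntrinsicallySync X w

/-!
If `Ĝ` is acyclic, its paths are shorter than `N := |Ĝ|`, so by determinism two paths of `G`
carrying the same label of length `≥ N` end at the same vertex. A point all of whose blocks of
length `N + 1` are readable in `G` therefore lifts to a bi-infinite path: at each time take the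
vertex reached by the preceding `N` symbols. Hence `⟨G⟩` is cut out by the unreadable words of
length `N + 1`.

Conversely, a shift of finite type is `M`-step. If `w` labels cycles at `p ≠ q`, follower
separation gives (up to symmetry) a word `v` following `q` but not `p`. With `u` synchronizing to
`p`, the words `u wᴹ` and `wᴹ v` are readable, hence so is `u wᴹ v`; but every reading of `u wᴹ`
ends at `p`, so `v` follows `p`.
-/

def OccursAt {A : Type} (x : ℤ → A) (i : ℤ) (w : List A) : Prop :=
  ∀ n : Fin w.length, x (i + (n : ℕ)) = w.get n

def window {A : Type} (x : ℤ → A) (i : ℤ) (n : ℕ) : List A :=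
  List.ofFn fun k : Fin n => x (i + k)

section Occurrences

variable {A : Type} {x y : ℤ → A} {i : ℤ} {u v w : List A}

theorem appearsIn_iff : AppearsIn w x ↔ ∃ i, OccursAt x i w := Iff.rfl

theorem occursAt_iff : OccursAt x i w ↔ ∀ k (hk : k < w.length), x (i + k) = w[k] :=
  ⟨fun h k hk => h ⟨k, hk⟩, fun h n => h n n.2⟩

theorem occursAt_append :
    OccursAt x i (u ++ v) ↔ OccursAt x i u ∧ OccursAt x (i + u.length) v := by
  simp only [occursAt_iff, List.length_append]
  constructor
  · intro h
    refine ⟨fun k hk => ?_, fun k hk => ?_⟩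
    · rw [h k (by omega), List.getElem_append_left hk]
    · rw [add_assoc, ← Nat.cast_add, h _ (by omega), List.getElem_append_right (by omega)]
      simp
  · rintro ⟨hu, hv⟩ k hk
    by_cases hku : k < u.length
    · rw [hu k hku, List.getElem_append_left hku]
    · obtain ⟨m, rfl⟩ : ∃ m, k = u.length + m := ⟨k - u.length, by omega⟩
      rw [Nat.cast_add, ← add_assoc, hv m (by omega), List.getElem_append_right (by omega)]
      simp

theorem OccursAt.congr (h : OccursAt x i w) {j : ℤ}
    (hxy : ∀ k < w.length, y (j + k) = x (i + k)) : OccursAt y j w :=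
  occursAt_iff.2 fun k hk => (hxy k hk).trans (occursAt_iff.1 h k hk)

theorem OccursAt.eq_of_occursAt (hx : OccursAt x i w) {d : ℤ} (hy : OccursAt y (i + d) w)
    {m : ℤ} (him : i ≤ m) (hmi : m < i + w.length) : x m = y (m + d) := by
  obtain ⟨k, rfl⟩ : ∃ k : ℕ, m = i + k := ⟨(m - i).toNat, by omega⟩
  have hk : k < w.length := by omega
  rw [occursAt_iff.1 hx k hk, add_right_comm, occursAt_iff.1 hy k hk]

variable (x i) (n : ℕ)

theorem length_window : (window x i n).length = n := List.length_ofFn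

theorem occursAt_window : OccursAt x i (window x i n) :=
  occursAt_iff.2 fun k hk => by simp [window]

theorem window_succ_eq_append : window x i (n + 1) = window x i n ++ [x (i + n)] := by
  simp only [window, List.ofFn_succ', List.concat_eq_append, Fin.val_castSucc, Fin.val_last]

theorem window_succ_eq_cons : window x i (n + 1) = x i :: window x (i + 1) n := by
  simp only [window, List.ofFn_succ, Fin.val_zero, Fin.val_succ]
  congr 2
  · simp
  · ext k; congr 1; push_cast; ring

end Occurrences

section ShiftOfFiniteType

variable {A : Type}

/-- Forbidden words no longer than the overlap `w` cannot straddle the junction. -/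
theorem avoids_splice {F : Set (List A)} {x y : ℤ → A} {s d : ℤ} {w : List A}
    (hF : ∀ f ∈ F, f.length ≤ w.length)
    (hxF : ∀ f ∈ F, ¬ AppearsIn f x) (hyF : ∀ f ∈ F, ¬ AppearsIn f y)
    (hx : OccursAt x s w) (hy : OccursAt y (s + d) w) :
    ∀ f ∈ F, ¬ AppearsIn f (fun m => if m < s + w.length then x m else y (m + d)) := by
  intro f hf hfz
  obtain ⟨t, ht⟩ := appearsIn_iff.1 hfz
  by_cases hleft : t + f.length ≤ s + w.length
  · refine hxF f hf ⟨t, ht.congr fun k hk => ?_⟩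
    exact (if_pos (show t + k < s + w.length by omega)).symm
  · have hfw := hF f hf
    refine hyF f hf ⟨t + d, ht.congr fun k hk => ?_⟩
    rw [add_right_comm]
    split_ifs with hmid
    · exact (hx.eq_of_occursAt hy (by omega) hmid).symm
    · rfl

theorem IsSFT.exists_mStep {X : Set (ℤ → A)} (hX : IsSFT X) : ∃ M, MStep X M := by
  obtain ⟨F, hFfin, rfl⟩ := hX
  obtain ⟨M, hM⟩ := (hFfin.image List.length).bddAbove
  refine ⟨M, fun w hw hMw => ⟨hw, fun u v ⟨x, hxF, hux⟩ ⟨y, hyF, hwy⟩ => ?_⟩⟩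
  obtain ⟨i, hx⟩ := appearsIn_iff.1 hux
  obtain ⟨j, hy⟩ := appearsIn_iff.1 hwy
  rw [occursAt_append] at hx hy
  set s := i + u.length
  have hys : OccursAt y (s + (j - s)) w := by rw [add_sub_cancel]; exact hy.1
  refine ⟨_, avoids_splice (fun f hf => (hM ⟨f, hf, rfl⟩).trans hMw) hxF hyF hx.2 hys,
    appearsIn_iff.2 ⟨i, ?_⟩⟩
  rw [occursAt_append, occursAt_append]
  refine ⟨hx.1.congr fun k hk => ?_, hx.2.congr fun k hk => ?_, hy.2.congr fun k hk => ?_⟩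
  · exact if_pos (by omega)
  · exact if_pos (by omega)
  · refine (if_neg (by omega)).trans ?_
    congr 1
    ring

end ShiftOfFiniteType

namespace LabeledGraph

variable {V A : Type} {G : LabeledGraph V A}

def Acyclic (G : LabeledGraph V A) : Prop :=
  ¬ ∃ p w, w ≠ [] ∧ G.Walk p w p

theorem walk_append {u v : List A} : ∀ {p r : V},
    G.Walk p (u ++ v) r ↔ ∃ q, G.Walk p u q ∧ G.Walk q v r := by
  induction u with
  | nil => intro p r; simp [Walk]
  | cons a u ih => intro p r; simp only [List.cons_append, Walk, ih]; aesop

theorem Deterministic.walk_eq (hdet : G.Deterministic) : ∀ {w : List A} {p q q' : V},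
    G.Walk p w q → G.Walk p w q' → q = q'
  | [], _, _, _, h, h' => h.symm.trans h'
  | _ :: _, _, _, _, ⟨_, he, hw⟩, ⟨_, he', hw'⟩ => by
    cases hdet _ _ _ _ he he'
    exact hdet.walk_eq hw hw'

theorem walk_flatten_replicate {p : V} {w : List A} (h : G.Walk p w p) (n : ℕ) :
    G.Walk p (List.replicate n w).flatten p := by
  induction n with
  | zero => rfl
  | succ n ih => exact walk_append.2 ⟨p, h, ih⟩

theorem exists_walk_take {p q : V} {w : List A} (h : G.Walk p w q) (k : ℕ) :
    ∃ r, G.Walk p (w.take k) r := by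
  rw [← List.take_append_drop k w] at h
  obtain ⟨r, hr, -⟩ := walk_append.1 h
  exact ⟨r, hr⟩

/-- The vertices reached by the prefixes of a walk are pairwise distinct: by determinism, the
piece of the walk between two visits of the same vertex would be a cycle. -/
theorem Acyclic.length_lt_card [Finite V] (hac : G.Acyclic) (hdet : G.Deterministic)
    {p q : V} {w : List A} (h : G.Walk p w q) : w.length < Nat.card V := by
  choose r hr using exists_walk_take h
  have hne : ∀ i j, i < j → j ≤ w.length → r i ≠ r j := by
    intro i j hij hj heq
    obtain ⟨d, rfl⟩ : ∃ d, j = i + d := ⟨j - i, by omega⟩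
    have hwj := hr (i + d)
    rw [List.take_add] at hwj
    obtain ⟨s, hs, hcyc⟩ := walk_append.1 hwj
    obtain rfl := hdet.walk_eq hs (hr i)
    refine hac ⟨r i, _, ?_, by rwa [← heq] at hcyc⟩
    rw [← List.length_pos_iff, List.length_take, List.length_drop]
    omega
  have hinj : Function.Injective fun k : Fin (w.length + 1) => r k := by
    intro i j hij
    rcases lt_trichotomy i j with hlt | heq | hgt
    · exact absurd hij (hne i j hlt (by omega))
    · exact heq
    · exact absurd hij.symm (hne j i hgt (by omega))
  simpa using Nat.card_le_card_of_injective _ hinj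

theorem Deterministic.pairGraph (hdet : G.Deterministic) : G.pairGraph.Deterministic :=
  fun _ _ _ _ ⟨h₁, h₂⟩ ⟨h₁', h₂'⟩ =>
    Subtype.ext (Prod.ext (hdet _ _ _ _ h₁ h₁') (hdet _ _ _ _ h₂ h₂'))

theorem walk_fst_snd_of_pairGraph_walk :
    ∀ {w : List A} {x y : { pq : V × V // pq.1 ≠ pq.2 }},
      G.pairGraph.Walk x w y → G.Walk x.1.1 w y.1.1 ∧ G.Walk x.1.2 w y.1.2
  | [], _, _, h => by subst h; exact ⟨rfl, rfl⟩
  | _ :: _, _, _, ⟨_, ⟨h₁, h₂⟩, hw⟩ =>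
    ⟨⟨_, h₁, (walk_fst_snd_of_pairGraph_walk hw).1⟩,
      ⟨_, h₂, (walk_fst_snd_of_pairGraph_walk hw).2⟩⟩

theorem pairGraph_walk_of_walk (hdet : G.Deterministic) : ∀ {w : List A} {p p' q q' : V},
    G.Walk p w q → G.Walk p' w q' → (hq : q ≠ q') →
      ∃ hp : p ≠ p', G.pairGraph.Walk ⟨(p, p'), hp⟩ w ⟨(q, q'), hq⟩
  | [], _, _, _, _, h, h', hq => by subst h h'; exact ⟨hq, rfl⟩
  | _ :: _, _, _, _, _, ⟨r, he, hw⟩, ⟨r', he', hw'⟩, hq => by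
    obtain ⟨hr, hpw⟩ := pairGraph_walk_of_walk hdet hw hw' hq
    refine ⟨?_, ⟨⟨(r, r'), hr⟩, ⟨he, he'⟩, hpw⟩⟩
    rintro rfl
    exact hr (hdet _ _ _ _ he he')

theorem transSet_univ_subsingleton_of_acyclic [Finite V] (hdet : G.Deterministic)
    (hac : G.pairGraph.Acyclic) {w : List A}
    (hw : Nat.card { pq : V × V // pq.1 ≠ pq.2 } ≤ w.length) :
    (G.transSet Set.univ w).Subsingleton := by
  rintro q ⟨p, -, hp⟩ q' ⟨p', -, hp'⟩
  by_contra hq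
  obtain ⟨_, hpw⟩ := pairGraph_walk_of_walk hdet hp hp' hq
  exact (hac.length_lt_card hdet.pairGraph hpw).not_ge hw

theorem walk_of_occursAt {x : ℤ → A} {v : ℤ → V}
    (hv : ∀ j, G.Edge (v j) (x j) (v (j + 1))) :
    ∀ {w : List A} {i : ℤ}, OccursAt x i w → G.Walk (v i) w (v (i + w.length))
  | [], i, _ => by simp [Walk]
  | a :: w, i, h => by
    rw [← List.singleton_append, occursAt_append] at h
    refine ⟨v (i + 1), ?_, ?_⟩
    · have ha : x i = a := by simpa using h.1 ⟨0, by simp⟩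
      exact ha ▸ hv i
    · convert walk_of_occursAt hv h.2 using 2
      · simp
      · simp; ring

theorem exists_walk_of_mem_lang {w : List A} (hw : w ∈ lang G.shift) :
    ∃ p q, G.Walk p w q := by
  obtain ⟨x, ⟨v, hv⟩, i, hi⟩ := hw
  exact ⟨_, _, walk_of_occursAt hv hi⟩

theorem exists_forward_ray (hess : G.Essential) : ∀ {w : List A} {p : V}, w ∈ G.follower p →
    ∃ (v : ℕ → V) (a : ℕ → A), v 0 = p ∧ (∀ n, G.Edge (v n) (a n) (v (n + 1))) ∧
      ∀ k (hk : k < w.length), a k = w[k]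
  | [], p, _ => by
    choose a r h using fun q => (hess q).1
    exact ⟨fun n => r^[n] p, fun n => a (r^[n] p), rfl,
      fun n => by simpa only [Function.iterate_succ_apply'] using h _,
      fun k hk => absurd hk (by simp)⟩
  | b :: w, p, ⟨q, r, he, hw⟩ => by
    obtain ⟨v, a, hv0, hv, ha⟩ := exists_forward_ray hess ⟨q, hw⟩
    refine ⟨fun | 0 => p | n + 1 => v n, fun | 0 => b | n + 1 => a n, rfl, ?_, ?_⟩
    · rintro (_ | n)
      · simpa [hv0] using he
      · exact hv n
    · rintro (_ | k) hk
      · rfl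
      · exact ha k (by simpa using hk)

theorem exists_backward_ray (hess : G.Essential) (p : V) :
    ∃ (v : ℕ → V) (a : ℕ → A), v 0 = p ∧ ∀ n, G.Edge (v (n + 1)) (a n) (v n) := by
  choose a r h using fun q => (hess q).2
  exact ⟨fun n => r^[n] p, fun n => a (r^[n] p), rfl,
    fun n => by simpa only [Function.iterate_succ_apply'] using h _⟩

theorem mem_lang_of_walk (hess : G.Essential) {p q : V} {w : List A} (hw : G.Walk p w q) :
    w ∈ lang G.shift := by
  obtain ⟨v, a, hv0, hv, ha⟩ := exists_forward_ray hess ⟨q, hw⟩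
  obtain ⟨v', a', hv'0, hv'⟩ := exists_backward_ray hess p
  refine ⟨fun | Int.ofNat n => a n | Int.negSucc n => a' n,
    ⟨fun | Int.ofNat n => v n | Int.negSucc n => v' (n + 1), ?_⟩, 0, ?_⟩
  · rintro ((_ | n) | (_ | n))
    · exact hv 0
    · exact hv (n + 1)
    · simpa [hv0, hv'0] using hv' 0
    · exact hv' (n + 1)
  · intro n
    simpa using ha n n.2

theorem isSFT_shift_of_transSet_subsingleton [Finite A] {N : ℕ}
    (hN : ∀ w : List A, N ≤ w.length → (G.transSet Set.univ w).Subsingleton) :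
    IsSFT G.shift := by
  refine ⟨{w | w.length = N + 1 ∧ w ∉ lang G.shift},
    (List.finite_length_eq A (N + 1)).subset fun w hw => hw.1, Set.ext fun x => ⟨?_, ?_⟩⟩
  · rintro hx w ⟨-, hw⟩ hwx
    exact hw ⟨x, hx, hwx⟩
  intro hx
  have hread : ∀ i, ∃ p q, G.Walk p (window x i (N + 1)) q := fun i =>
    exists_walk_of_mem_lang <| by_contra fun hi =>
      hx _ ⟨length_window x i _, hi⟩ ⟨i, occursAt_window x i _⟩
  have hend : ∀ i, ∃ r, r ∈ G.transSet Set.univ (window x i N) := fun i => by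
    obtain ⟨p, q, hpq⟩ := hread i
    rw [window_succ_eq_append, walk_append] at hpq
    obtain ⟨r, hr, -⟩ := hpq
    exact ⟨r, p, trivial, hr⟩
  choose u hu using hend
  have huniq : ∀ i {p r}, G.Walk p (window x i N) r → r = u i := fun i p r h =>
    hN _ (length_window x i N).ge ⟨p, trivial, h⟩ (hu i)
  refine ⟨fun j => u (j - N), fun j => ?_⟩
  show G.Edge (u (j - N)) (x j) (u (j + 1 - N))
  obtain ⟨p, q, hpq⟩ := hread (j - N)
  have hpq' := hpq
  rw [window_succ_eq_append, walk_append] at hpq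
  rw [window_succ_eq_cons] at hpq'
  obtain ⟨r, hr, q', he, rfl⟩ := hpq
  obtain ⟨s, -, hs⟩ := hpq'
  rwa [sub_add_cancel, huniq _ hr, huniq _ hs, sub_add_eq_add_sub] at he

theorem follower_subset_of_mStep (hdet : G.Deterministic) (hess : G.Essential) {M : ℕ}
    (hM : MStep G.shift M) {p q : V} (hp : G.SyncVertex p) {w : List A} (hw : w ≠ [])
    (hwp : G.Walk p w p) (hwq : G.Walk q w q) : G.follower q ⊆ G.follower p := by
  rintro v ⟨q', hv⟩
  obtain ⟨u, hu⟩ := hp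
  obtain ⟨p₀, -, hup⟩ : p ∈ G.transSet Set.univ u := hu.symm ▸ rfl
  set W := (List.replicate M w).flatten
  have hWp := walk_flatten_replicate hwp M
  have hWlen : M ≤ W.length := by
    simpa [W, List.length_flatten] using Nat.le_mul_of_pos_right M (List.length_pos_iff.2 hw)
  have huWv : u ++ (W ++ v) ∈ lang G.shift :=
    (hM W (mem_lang_of_walk hess hWp) hWlen).2 u v
      (mem_lang_of_walk hess (walk_append.2 ⟨p, hup, hWp⟩))
      (mem_lang_of_walk hess (walk_append.2 ⟨q, walk_flatten_replicate hwq M, hv⟩))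
  obtain ⟨r₀, r, hr⟩ := exists_walk_of_mem_lang huWv
  obtain ⟨p₁, hp₁, hWv⟩ := walk_append.1 hr
  obtain rfl : p₁ = p := hu.subset ⟨r₀, trivial, hp₁⟩
  obtain ⟨p₂, hp₂, hv'⟩ := walk_append.1 hWv
  obtain rfl := hdet.walk_eq hp₂ hWp
  exact ⟨r, hv'⟩

theorem pairGraph_acyclic_of_isSFT (hdet : G.Deterministic) (hess : G.Essential)
    (hfs : G.FollowerSeparated) (hsync : G.Synchronizing) (hX : IsSFT G.shift) :
    G.pairGraph.Acyclic := by
  obtain ⟨M, hM⟩ := hX.exists_mStep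
  rintro ⟨⟨⟨p, q⟩, hpq⟩, w, hw, hcyc⟩
  obtain ⟨hwp, hwq⟩ := walk_fst_snd_of_pairGraph_walk hcyc
  exact hpq <| hfs p q <| subset_antisymm
    (follower_subset_of_mStep hdet hess hM (hsync q) hw hwq hwp)
    (follower_subset_of_mStep hdet hess hM (hsync p) hw hwp hwq)

end LabeledGraph

/-- Let `G` be a follower-separated, synchronizing, deterministic presentation
over a finite alphabet. Then `⟨G⟩` is a shift of finite type if and only if
the graph `Ĝ` is acyclic (has no nonempty path starting and ending at the
same vertex). -/
theorem stmt7 {V A : Type} [Fintype V] [Fintype A] (G : LabeledGraph V A)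
    (hdet : G.Deterministic) (hess : G.Essential)
    (hfs : G.FollowerSeparated) (hsync : G.Synchronizing) :
    IsSFT G.shift ↔ ¬ ∃ (x : { pq : V × V // pq.1 ≠ pq.2 }) (w : List A),
      w ≠ [] ∧ G.pairGraph.Walk x w x :=
  ⟨LabeledGraph.pairGraph_acyclic_of_isSFT hdet hess hfs hsync, fun hac =>
    LabeledGraph.isSFT_shift_of_transSet_subsingleton fun _ hw =>
      LabeledGraph.transSet_univ_subsingleton_of_acyclic hdet hac hw⟩
end

section
/- Let M_1, …, M_n be DFAs over a common alphabet Σ, with each accepting set F_i nonempty and every state of M_i reachable from its initial state s_i, and let G be the labeled graph obtained from the first reduction construction applied to M_1, …, M_n. Then ⋃_{i=1}^n L(M_i) = Σ* if and only if the shift space ⟨G⟩ is irreducible. -/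
/-- A deterministic finite automaton over state type `Q` and alphabet `A`. -/
structure DFA' (Q A : Type) where
  step : Q → A → Q
  start : Q
  accept : Set Q

/-- Extended transition function. -/
def DFA'.evalFrom {Q A : Type} (M : DFA' Q A) (q : Q) (w : List A) : Q :=
  w.foldl M.step q

/-- The language of a DFA. -/
def DFA'.lang {Q A : Type} (M : DFA' Q A) : Set (List A) :=
  { w | M.evalFrom M.start w ∈ M.accept }

/-- Alphabet `Σ ∪ {◁, ▷, *, ℓ}`. -/
inductive Sym1 (A : Type) : Type
  | letter : A → Sym1 A
  | lm : Sym1 A    -- ◁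
  | rm : Sym1 A    -- ▷
  | star : Sym1 A  -- *
  | ell : Sym1 A   -- ℓ

/-- Vertices of the first reduction construction: the pre-initial states `p_i`,
the DFA states, and the two special states `p*` and `s*`. -/
inductive V1 {n : ℕ} (Q : Fin n → Type) : Type
  | pre : Fin n → V1 Q
  | st : (i : Fin n) → Q i → V1 Q
  | pstar : V1 Q
  | sstar : V1 Q

/-- Edges of the first reduction construction. -/
inductive Red1Edge {n : ℕ} {Q : Fin n → Type} {A : Type} (M : ∀ i, DFA' (Q i) A) :
    V1 Q → Sym1 A → V1 Q → Prop
  /-- self loop labeled `*` on `p_i` -/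
  | preLoop (i : Fin n) : Red1Edge M (.pre i) .star (.pre i)
  /-- the embedded DFA transitions -/
  | dfaStep (i : Fin n) (q : Q i) (a : A) :
      Red1Edge M (.st i q) (.letter a) (.st i ((M i).step q a))
  /-- edge labeled `◁` from `p_i` to `s_i` -/
  | enter (i : Fin n) : Red1Edge M (.pre i) .lm (.st i ((M i).start))
  /-- edge labeled `▷` from each accepting state to `p_1` -/
  | exitAcc (i : Fin n) (q : Q i) (j : Fin n) :
      q ∈ (M i).accept → (j : ℕ) = 0 → Red1Edge M (.st i q) .rm (.pre j)
  /-- edge labeled `ℓ` from each state of `M_i` to `s_i` -/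
  | reset (i : Fin n) (q : Q i) : Red1Edge M (.st i q) .ell (.st i ((M i).start))
  /-- self loop labeled `*` on `p*` -/
  | pstarLoop : Red1Edge M .pstar .star .pstar
  /-- edge labeled `◁` from `p*` to `s*` -/
  | pstarEnter : Red1Edge M .pstar .lm .sstar
  /-- edge labeled `▷` from `s*` to `p_1` -/
  | sstarExit (j : Fin n) : (j : ℕ) = 0 → Red1Edge M .sstar .rm (.pre j)
  /-- self loop labeled `a` on `s*` for each `a ∈ Σ` -/
  | sstarLoop (a : A) : Red1Edge M .sstar (.letter a) .sstar
  /-- edge labeled `ℓ` from `p_i` to `p_{i+1}` for `i = 1, …, n-1` -/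
  | chain (i j : Fin n) : (j : ℕ) = (i : ℕ) + 1 → Red1Edge M (.pre i) .ell (.pre j)
  /-- edge labeled `ℓ` from `p_n` to `s*` -/
  | lastChain (i : Fin n) : (i : ℕ) + 1 = n → Red1Edge M (.pre i) .ell .sstar

/-- The labeled graph `G` of the first reduction construction. -/
def Red1 {n : ℕ} {Q : Fin n → Type} {A : Type} (M : ∀ i, DFA' (Q i) A) :
    LabeledGraph (V1 Q) (Sym1 A) where
  Edge := Red1Edge M


/-!
Write `p₁` for `V1.pre ⟨0, hn⟩`. Every vertex reaches `p₁`, every vertex other than `p*` is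
reached from `p₁`, and `p₁` and `p*` carry `*`-loops, so `B(⟨G⟩)` is exactly the set of labels of
finite paths of `G`.

If the `Mᵢ` cover `Σ*`, a path leaving `p*` can be moved to start at some `pᵢ`: the letters read
at `s*` before a `▷` form a word accepted by some `Mᵢ`, so `Mᵢ` reads them too and then emits the
`▷`. Two paths, the second not starting at `p*`, are then joined through `p₁`.

Conversely, no edge enters `p*` from another vertex, so in a path labeled `▷ z ◁ w ▷` the `◁` is
read at some `pᵢ`; the path then runs through `Mᵢ` from `sᵢ`, and the final `▷` forces `w ∈ L(Mᵢ)`.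
-/

namespace LabeledGraph

variable {V A : Type} {G : LabeledGraph V A} {p q r : V}

theorem walk_append_iff {u v : List A} :
    G.Walk p (u ++ v) r ↔ ∃ q, G.Walk p u q ∧ G.Walk q v r := by
  induction u generalizing p with
  | nil => exact ⟨fun h => ⟨p, rfl, h⟩, fun ⟨_, hpq, h⟩ => hpq ▸ h⟩
  | cons a u ih =>
    simp only [List.cons_append, Walk, ih]
    exact ⟨fun ⟨s, he, q, hu, hv⟩ => ⟨q, ⟨s, he, hu⟩, hv⟩,
      fun ⟨q, ⟨s, he, hu⟩, hv⟩ => ⟨s, he, q, hu, hv⟩⟩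

theorem Walk.append {u v : List A} (hu : G.Walk p u q) (hv : G.Walk q v r) :
    G.Walk p (u ++ v) r :=
  walk_append_iff.2 ⟨q, hu, hv⟩

theorem walk_singleton {a : A} (h : G.Edge p a q) : G.Walk p [a] q :=
  ⟨q, h, rfl⟩

theorem Reachable.trans (hpq : G.Reachable p q) (hqr : G.Reachable q r) : G.Reachable p r :=
  let ⟨u, hu⟩ := hpq
  let ⟨v, hv⟩ := hqr
  ⟨u ++ v, hu.append hv⟩

theorem reachable_of_edge {a : A} (h : G.Edge p a q) : G.Reachable p q :=
  ⟨[a], walk_singleton h⟩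

theorem exists_ray_of_walk {w : List A} {b : A} (hw : G.Walk p w q) (hb : G.Edge q b q) :
    ∃ (f : ℕ → V) (g : ℕ → A), f 0 = p ∧ (∀ j, G.Edge (f j) (g j) (f (j + 1))) ∧
      ∀ j (hj : j < w.length), g j = w[j] := by
  induction w generalizing p with
  | nil =>
    subst hw
    exact ⟨fun _ => p, fun _ => b, rfl, fun _ => hb, fun _ hj => absurd hj (Nat.not_lt_zero _)⟩
  | cons a w ih =>
    obtain ⟨s, he, hw⟩ := hw
    obtain ⟨f, g, hf0, hfg, hgw⟩ := ih hw
    refine ⟨fun j => Nat.casesOn j p f, fun j => Nat.casesOn j a g, rfl, ?_, ?_⟩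
    · rintro (_ | j)
      exacts [by simpa [hf0] using he, hfg j]
    · rintro (_ | j) hj
      exacts [rfl, hgw j (Nat.succ_lt_succ_iff.1 hj)]

theorem mem_lang_shift_of_walk_of_loops {w : List A} {a b : A} (ha : G.Edge p a p)
    (hw : G.Walk p w q) (hb : G.Edge q b q) : w ∈ lang G.shift := by
  obtain ⟨f, g, hf0, hfg, hgw⟩ := exists_ray_of_walk hw hb
  refine ⟨fun j => if j < 0 then a else g j.toNat,
    ⟨fun j => if j < 0 then p else f j.toNat, fun j => ?_⟩, 0, fun m => ?_⟩
  · rcases j with k | k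
    · have hk : ¬ ((k : ℤ) < 0) := by omega
      have hk1 : ¬ ((k : ℤ) + 1 < 0) := by omega
      have hk1' : ((k : ℤ) + 1).toNat = k + 1 := by omega
      simpa only [Int.ofNat_eq_natCast, hk, hk1, hk1', if_false, Int.toNat_natCast] using hfg k
    · have hk : Int.negSucc k < 0 := Int.negSucc_lt_zero k
      rcases k with _ | k
      · have h0 : Int.negSucc 0 + 1 = 0 := rfl
        simpa only [hk, h0, lt_irrefl, if_true, if_false, Int.toNat_zero, hf0] using ha
      · have hk1 : Int.negSucc (k + 1) + 1 < 0 := by omega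
        simpa only [hk, hk1, if_true] using ha
  · have hm : ¬ (((m : ℕ) : ℤ) < 0) := by omega
    simpa [hm] using hgw m m.2

theorem walk_of_appearsIn {w : List A} {x : ℤ → A} (hx : x ∈ G.shift) (hw : AppearsIn w x) :
    ∃ p q, G.Walk p w q := by
  obtain ⟨v, hv⟩ := hx
  obtain ⟨i, hi⟩ := hw
  refine ⟨v i, v (i + w.length), ?_⟩
  induction w generalizing i with
  | nil => simp [Walk]
  | cons a w ih =>
    have hx : x i = a := by simpa using hi ⟨0, by simp⟩
    refine ⟨v (i + 1), hx ▸ hv i, ?_⟩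
    have := ih (i + 1) fun m => by simpa [add_assoc, add_comm (1 : ℤ)] using hi m.succ
    simpa [add_assoc, add_comm (1 : ℤ)] using this

theorem mem_lang_shift_of_reachable {o o' : V} {w : List A} {a b : A} (ha : G.Edge o a o)
    (ho : G.Reachable o p) (hw : G.Walk p w q) (ho' : G.Reachable q o') (hb : G.Edge o' b o') :
    w ∈ lang G.shift := by
  obtain ⟨u, hu⟩ := ho
  obtain ⟨v, hv⟩ := ho'
  obtain ⟨x, hx, i, hi⟩ := mem_lang_shift_of_walk_of_loops ha (hu.append (hw.append hv)) hb
  refine ⟨x, hx, i + u.length, fun m => ?_⟩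
  have := hi ⟨u.length + m, by simp only [List.length_append]; omega⟩
  simp only [List.get_eq_getElem, List.getElem_append_right (Nat.le_add_right _ _),
    Nat.add_sub_cancel_left, List.getElem_append_left m.2] at this
  simpa [add_assoc] using this

end LabeledGraph

namespace Red1

open LabeledGraph

variable {n : ℕ} {Q : Fin n → Type} {A : Type} {M : ∀ i, DFA' (Q i) A}

theorem walk_st_letters (i : Fin n) (q : Q i) (w : List A) :
    (Red1 M).Walk (.st i q) (w.map .letter) (.st i ((M i).evalFrom q w)) := by
  induction w generalizing q with
  | nil => rfl
  | cons a w ih => exact ⟨_, .dfaStep i q a, ih _⟩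

theorem walk_sstar_letters (w : List A) : (Red1 M).Walk .sstar (w.map .letter) .sstar := by
  induction w with
  | nil => rfl
  | cons a w ih => exact ⟨_, .sstarLoop a, ih⟩

theorem reachable_pre_zero_pre (hn : 0 < n) (i : Fin n) :
    (Red1 M).Reachable (.pre ⟨0, hn⟩) (.pre i) := by
  obtain ⟨k, hk⟩ := i
  induction k with
  | zero => exact ⟨[], rfl⟩
  | succ k ih =>
    exact (ih (by omega)).trans (reachable_of_edge (Red1Edge.chain ⟨k, by omega⟩ _ rfl))

theorem reachable_pre_zero_of_ne_pstar (hn : 0 < n)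
    (hreach : ∀ i (q : Q i), ∃ w, (M i).evalFrom (M i).start w = q) {v : V1 Q}
    (hv : v ≠ .pstar) : (Red1 M).Reachable (.pre ⟨0, hn⟩) v := by
  cases v with
  | pre i => exact reachable_pre_zero_pre hn i
  | st i q =>
    obtain ⟨w, rfl⟩ := hreach i q
    exact (reachable_pre_zero_pre hn i).trans
      ⟨.lm :: w.map .letter, _, .enter i, walk_st_letters i _ w⟩
  | pstar => exact absurd rfl hv
  | sstar =>
    exact (reachable_pre_zero_pre hn ⟨n - 1, by omega⟩).trans
      (reachable_of_edge (Red1Edge.lastChain _ (Nat.sub_add_cancel hn)))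

theorem reachable_st_start_pre_zero (hn : 0 < n) (hacc : ∀ i, ((M i).accept).Nonempty)
    (hreach : ∀ i (q : Q i), ∃ w, (M i).evalFrom (M i).start w = q) (i : Fin n) :
    (Red1 M).Reachable (.st i (M i).start) (.pre ⟨0, hn⟩) := by
  obtain ⟨q, hq⟩ := hacc i
  obtain ⟨w, rfl⟩ := hreach i q
  exact ⟨_, (walk_st_letters i _ w).append (walk_singleton (.exitAcc i _ _ hq rfl))⟩

theorem reachable_pre_zero (hn : 0 < n) (hacc : ∀ i, ((M i).accept).Nonempty)
    (hreach : ∀ i (q : Q i), ∃ w, (M i).evalFrom (M i).start w = q) (v : V1 Q) :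
    (Red1 M).Reachable v (.pre ⟨0, hn⟩) := by
  cases v with
  | pre i =>
    exact (reachable_of_edge (Red1Edge.enter i)).trans
      (reachable_st_start_pre_zero hn hacc hreach i)
  | st i q =>
    exact (reachable_of_edge (Red1Edge.reset i q)).trans
      (reachable_st_start_pre_zero hn hacc hreach i)
  | pstar =>
    exact (reachable_of_edge Red1Edge.pstarEnter).trans
      (reachable_of_edge (Red1Edge.sstarExit _ rfl))
  | sstar => exact reachable_of_edge (Red1Edge.sstarExit _ rfl)

theorem mem_lang_shift_iff (hn : 0 < n) (hacc : ∀ i, ((M i).accept).Nonempty)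
    (hreach : ∀ i (q : Q i), ∃ w, (M i).evalFrom (M i).start w = q) (w : List (Sym1 A)) :
    w ∈ lang (Red1 M).shift ↔ ∃ p q, (Red1 M).Walk p w q := by
  refine ⟨fun ⟨x, hx, hw⟩ => walk_of_appearsIn hx hw, fun ⟨p, q, hw⟩ => ?_⟩
  have hq := reachable_pre_zero hn hacc hreach q
  by_cases hp : p = .pstar
  · subst hp
    exact mem_lang_shift_of_reachable .pstarLoop ⟨[], rfl⟩ hw hq (.preLoop _)
  · exact mem_lang_shift_of_reachable (.preLoop _) (reachable_pre_zero_of_ne_pstar hn hreach hp)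
      hw hq (.preLoop _)

/-- `u` is the word already read at `s*`, which `Mᵢ` must have read to be in step with it. -/
theorem exists_walk_st_of_walk_sstar (hn : 0 < n) (hU : ∀ u : List A, ∃ i, u ∈ (M i).lang)
    {v : List (Sym1 A)} {r : V1 Q} (hv : (Red1 M).Walk .sstar v r) (u : List A) :
    ∃ i r', (Red1 M).Walk (.st i ((M i).evalFrom (M i).start u)) v r' := by
  induction v generalizing u with
  | nil => exact ⟨⟨0, hn⟩, _, rfl⟩
  | cons c v ih =>
    obtain ⟨s, he, hv⟩ := hv
    cases he with
    | sstarExit j hj =>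
      obtain ⟨i, hi⟩ := hU u
      exact ⟨i, r, _, .exitAcc i _ j hi hj, hv⟩
    | sstarLoop a =>
      obtain ⟨i, r', h⟩ := ih hv (u ++ [a])
      refine ⟨i, r', _, .dfaStep i _ a, ?_⟩
      simpa [DFA'.evalFrom] using h

theorem exists_walk_pre_of_walk_pstar (hn : 0 < n) (hU : ∀ u : List A, ∃ i, u ∈ (M i).lang)
    {v : List (Sym1 A)} {r : V1 Q} (hv : (Red1 M).Walk .pstar v r) :
    ∃ i r', (Red1 M).Walk (.pre i) v r' := by
  induction v with
  | nil => exact ⟨⟨0, hn⟩, _, rfl⟩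
  | cons c v ih =>
    obtain ⟨s, he, hv⟩ := hv
    cases he with
    | pstarLoop =>
      obtain ⟨i, r', h⟩ := ih hv
      exact ⟨i, r', _, .preLoop i, h⟩
    | pstarEnter =>
      obtain ⟨i, r', h⟩ := exists_walk_st_of_walk_sstar hn hU hv []
      exact ⟨i, r', _, .enter i, h⟩

theorem irreducibleShift_of_forall_exists_mem_lang (hn : 0 < n)
    (hacc : ∀ i, ((M i).accept).Nonempty)
    (hreach : ∀ i (q : Q i), ∃ w, (M i).evalFrom (M i).start w = q)
    (hU : ∀ u : List A, ∃ i, u ∈ (M i).lang) : IrreducibleShift (Red1 M).shift := by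
  intro u hu v hv
  obtain ⟨p, q, hu⟩ := (mem_lang_shift_iff hn hacc hreach u).1 hu
  obtain ⟨p', q', hp', hv⟩ : ∃ p' q', p' ≠ .pstar ∧ (Red1 M).Walk p' v q' := by
    obtain ⟨p', q', hv⟩ := (mem_lang_shift_iff hn hacc hreach v).1 hv
    by_cases hp' : p' = .pstar
    · subst hp'
      obtain ⟨i, r', h⟩ := exists_walk_pre_of_walk_pstar hn hU hv
      exact ⟨.pre i, r', (nomatch ·), h⟩
    · exact ⟨p', q', hp', hv⟩
  obtain ⟨z, hz⟩ :=
    (reachable_pre_zero hn hacc hreach q).trans (reachable_pre_zero_of_ne_pstar hn hreach hp')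
  exact ⟨z, (mem_lang_shift_iff hn hacc hreach _).2 ⟨p, q', hu.append (hz.append hv)⟩⟩

theorem eq_pstar_of_reachable_pstar {v : V1 Q} (h : (Red1 M).Reachable v .pstar) :
    v = .pstar := by
  obtain ⟨w, hw⟩ := h
  induction w generalizing v with
  | nil => exact hw
  | cons c w ih =>
    obtain ⟨s, he, hw⟩ := hw
    obtain rfl := ih hw
    cases he
    rfl

theorem evalFrom_mem_accept_of_walk {i : Fin n} {q : Q i} {w : List A} {r : V1 Q}
    (h : (Red1 M).Walk (.st i q) (w.map .letter ++ [.rm]) r) :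
    (M i).evalFrom q w ∈ (M i).accept := by
  induction w generalizing q with
  | nil =>
    obtain ⟨s, he, -⟩ := h
    cases he
    assumption
  | cons a w ih =>
    obtain ⟨s, he, h⟩ := h
    cases he
    exact ih h

theorem exists_mem_lang_of_irreducibleShift (hn : 0 < n)
    (hacc : ∀ i, ((M i).accept).Nonempty)
    (hreach : ∀ i (q : Q i), ∃ w, (M i).evalFrom (M i).start w = q)
    (hirr : IrreducibleShift (Red1 M).shift) (w : List A) : ∃ i, w ∈ (M i).lang := by
  obtain ⟨qa, hqa⟩ := hacc ⟨0, hn⟩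
  have hu : [Sym1.rm] ∈ lang (Red1 M).shift := (mem_lang_shift_iff hn hacc hreach _).2
    ⟨_, _, walk_singleton (.exitAcc _ qa ⟨0, hn⟩ hqa rfl)⟩
  have hv : .lm :: (w.map .letter ++ [.rm]) ∈ lang (Red1 M).shift :=
    (mem_lang_shift_iff hn hacc hreach _).2 ⟨.pstar, .pre ⟨0, hn⟩, _, .pstarEnter,
      (walk_sstar_letters w).append (walk_singleton (.sstarExit _ rfl))⟩
  obtain ⟨z, hz⟩ := hirr _ hu _ hv
  rw [List.singleton_append] at hz
  obtain ⟨p, r, s, he, h⟩ := (mem_lang_shift_iff hn hacc hreach _).1 hz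
  obtain ⟨t, hz, t', he', h⟩ := walk_append_iff.1 h
  have ht : t ≠ .pstar := by
    rintro rfl
    obtain rfl := eq_pstar_of_reachable_pstar ⟨z, hz⟩
    cases he
  cases he' with
  | enter i => exact ⟨i, evalFrom_mem_accept_of_walk h⟩
  | pstarEnter => exact absurd rfl ht

end Red1

theorem stmt11_general {n : ℕ} {Q : Fin n → Type} {A : Type}
    (hn : 0 < n)
    (M : ∀ i, DFA' (Q i) A)
    (hacc : ∀ i, ((M i).accept).Nonempty)
    (hreach : ∀ i (q : Q i), ∃ w, (M i).evalFrom (M i).start w = q) :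
    (⋃ i, (M i).lang) = Set.univ ↔ IrreducibleShift (Red1 M).shift := by
  simp only [Set.eq_univ_iff_forall, Set.mem_iUnion]
  exact ⟨Red1.irreducibleShift_of_forall_exists_mem_lang hn hacc hreach,
    Red1.exists_mem_lang_of_irreducibleShift hn hacc hreach⟩

/-- Let `M_1, …, M_n` be DFAs over a common alphabet `Σ`, each with nonempty
accepting set and all states reachable from the initial state, and let `G` be
the graph of the first reduction construction. Then `⋃ᵢ L(Mᵢ) = Σ*` iff the
shift space `⟨G⟩` is irreducible. -/
theorem stmt11 {n : ℕ} {Q : Fin n → Type} {A : Type}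
    [Fintype A] [∀ i, Fintype (Q i)] (hn : 0 < n)
    (M : ∀ i, DFA' (Q i) A)
    (hacc : ∀ i, ((M i).accept).Nonempty)
    (hreach : ∀ i (q : Q i), ∃ w, (M i).evalFrom (M i).start w = q) :
    (⋃ i, (M i).lang) = Set.univ ↔ IrreducibleShift (Red1 M).shift :=
  stmt11_general hn M hacc hreach
end
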